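/- For every positive integer b, there exists an integer N(b) such that for all n ≥ N(b), b · p_{n+1}^2 / (n+1) < π(p_{n+1}^2). -/
import Mathlib

open Filter Real

-- weak Chebyshev: 4^k ≤ (2k)^(π(2k)+1)
lemma cheb_nat (k : ℕ) (hk : 0 < k) :
    4 ^ k ≤ (2 * k) ^ (Nat.primeCounting (2 * k) + 1) := by
  have h2k : 0 < 2 * k := by omega
  have hcb : Nat.centralBinom k ≤ (2 * k) ^ Nat.primeCounting (2 * k) := by
    calc Nat.centralBinom k
        = ∏ p ∈ Finset.range (2 * k + 1), p ^ (Nat.centralBinom k).factorization p :=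
          (Nat.prod_pow_factorization_centralBinom k).symm
      _ ≤ ∏ p ∈ Finset.range (2 * k + 1), (if p.Prime then 2 * k else 1) := by
          apply Finset.prod_le_prod'
          intro p _
          by_cases hp : p.Prime
          · simp only [if_pos hp]
            exact Nat.pow_factorization_choose_le h2k
          · simp [if_neg hp, Nat.factorization_eq_zero_of_not_prime _ hp]
      _ = (2 * k) ^ Nat.primeCounting (2 * k) := by
          rw [Finset.prod_ite, Finset.prod_const, Finset.prod_const, one_pow, mul_one]
          congr 1
          rw [Nat.primeCounting, ← Nat.primesBelow_card_eq_primeCounting']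
          rfl
  calc 4 ^ k ≤ 2 * k * Nat.centralBinom k :=
        Nat.four_pow_le_two_mul_self_mul_centralBinom k hk
    _ ≤ 2 * k * (2 * k) ^ Nat.primeCounting (2 * k) := Nat.mul_le_mul_left _ hcb
    _ = (2 * k) ^ (Nat.primeCounting (2 * k) + 1) := by rw [pow_succ]; ring

-- real form
lemma cheb_real (m : ℕ) (hm : 2 ≤ m) :
    ((m : ℝ) - 1) * Real.log 2 ≤ ((Nat.primeCounting m : ℝ) + 1) * Real.log m := by
  set k := m / 2 with hk
  have hk1 : 1 ≤ k := by omega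
  have h2k : 2 * k ≤ m := by omega
  have hm2k : m ≤ 2 * k + 1 := by omega
  have hnat : 4 ^ k ≤ (m : ℕ) ^ (Nat.primeCounting m + 1) := by
    calc 4 ^ k ≤ (2 * k) ^ (Nat.primeCounting (2 * k) + 1) := cheb_nat k hk1
      _ ≤ m ^ (Nat.primeCounting (2 * k) + 1) := Nat.pow_le_pow_left h2k _
      _ ≤ m ^ (Nat.primeCounting m + 1) := by
          apply Nat.pow_le_pow_right (by omega)
          exact Nat.add_le_add_right (Nat.monotone_primeCounting h2k) 1
  have hlog : (k : ℝ) * Real.log 4 ≤ ((Nat.primeCounting m : ℝ) + 1) * Real.log m := by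
    have := Real.log_le_log (by positivity) (show ((4:ℝ)^k) ≤ (m:ℝ) ^ (Nat.primeCounting m + 1) by
      exact_mod_cast hnat)
    rw [Real.log_pow, Real.log_pow] at this; push_cast at this ⊢; linarith
    -- adjust below if needed
  have h4 : Real.log 4 = 2 * Real.log 2 := by
    rw [show (4:ℝ) = 2^2 by norm_num, Real.log_pow]; push_cast; ring
  have hle : ((m : ℝ) - 1) * Real.log 2 ≤ (k : ℝ) * Real.log 4 := by
    rw [h4]
    have : ((m : ℝ) - 1) ≤ 2 * k := by
      have : (m : ℝ) ≤ 2 * k + 1 := by exact_mod_cast hm2k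
      linarith
    nlinarith [Real.log_pos (show (1:ℝ) < 2 by norm_num)]
  linarith

set_option maxHeartbeats 1000000 in
theorem pi_dominates_b_psq_over_n (b : ℕ) (hb : 0 < b) :
    ∃ N : ℕ, ∀ n : ℕ, N ≤ n →
      (b : ℝ) * (Nat.nth Nat.Prime n : ℝ) ^ 2 / (n + 1)
        < Nat.primeCounting ((Nat.nth Nat.Prime n) ^ 2) := by
  have hlog2 : 0 < Real.log 2 := Real.log_pos (by norm_num)
  have hb1 : (1:ℝ) ≤ b := by exact_mod_cast hb
  -- y / (log y)^2 → ∞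
  have T : Tendsto (fun y : ℝ => y / (Real.log y) ^ 2) atTop atTop := by
    have h1 : Tendsto (fun z : ℝ => Real.exp z / z ^ 2) atTop atTop :=
      Real.tendsto_exp_div_pow_atTop 2
    have h2 := h1.comp Real.tendsto_log_atTop
    apply h2.congr'
    filter_upwards [eventually_ge_atTop (1:ℝ)] with y hy
    simp [Function.comp, Real.exp_log (by linarith : (0:ℝ) < y)]
  set c : ℝ := (Real.log 2) ^ 2 / (8 * b) with hcdef
  have hc : 0 < c := by positivity
  have hev : ∀ᶠ y : ℝ in atTop,
      8 * (b:ℝ) * y ^ 2 * (Real.log y) ^ 2 < (y - 1) * (y ^ 2 - 1) * (Real.log 2) ^ 2 := by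
    filter_upwards [T.eventually_gt_atTop (4 / c), eventually_ge_atTop (2:ℝ)] with y hy h2y
    have hly : 0 < Real.log y := Real.log_pos (by linarith)
    have hly2 : 0 < (Real.log y) ^ 2 := by positivity
    have h1 : (Real.log y) ^ 2 < c / 4 * y := by
      rw [div_lt_div_iff₀ hc hly2] at hy
      linarith
    have hcval : c * (8 * b) = (Real.log 2) ^ 2 := by
      rw [hcdef]; field_simp
    have hy3 : y ^ 3 / 4 ≤ (y - 1) * (y ^ 2 - 1) := by nlinarith
    have hLs : 8 * (b:ℝ) * y ^ 2 * (Real.log y) ^ 2 < 8 * (b:ℝ) * y ^ 2 * (c / 4 * y) :=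
      mul_lt_mul_of_pos_left h1 (by positivity)
    have hR : 8 * (b:ℝ) * y ^ 2 * (c / 4 * y) = y ^ 3 / 4 * (Real.log 2) ^ 2 := by
      linear_combination (y ^ 3 / 4) * hcval
    have hR2 : y ^ 3 / 4 * (Real.log 2) ^ 2 ≤ (y - 1) * (y ^ 2 - 1) * (Real.log 2) ^ 2 :=
      mul_le_mul_of_nonneg_right hy3 (sq_nonneg _)
    linarith
  obtain ⟨M, hM⟩ := (Filter.eventually_atTop.mp (tendsto_natCast_atTop_atTop.eventually hev))
  refine ⟨M, fun n hn => ?_⟩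
  set p := Nat.nth Nat.Prime n with hpdef
  have hpn2 : n + 2 ≤ p := Nat.add_two_le_nth_prime n
  have hp2 : 2 ≤ p := by omega
  have hx2 : (2:ℝ) ≤ (p:ℝ) := by exact_mod_cast hp2
  have hMp : M ≤ p := by omega
  have hQ := hM p hMp
  -- π p = n + 1
  have hπp : Nat.primeCounting p = n + 1 := by
    rw [Nat.primeCounting]
    show Nat.count Nat.Prime (p + 1) = n + 1
    rw [Nat.count_succ, if_pos (Nat.prime_nth_prime n)]
    congr 1
    exact Nat.primeCounting'_nth_eq n
  have hπmono : n + 1 ≤ Nat.primeCounting (p ^ 2) := by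
    rw [← hπp]
    exact Nat.monotone_primeCounting (Nat.le_self_pow two_ne_zero p)
  set x : ℝ := (p : ℝ) with hxdef
  set L : ℝ := Real.log x with hLdef
  have hL : 0 < L := Real.log_pos (by linarith)
  have hπ2pos : (1:ℝ) ≤ (Nat.primeCounting (p ^ 2) : ℝ) := by
    exact_mod_cast Nat.one_le_iff_ne_zero.mpr (by omega)
  set π2 : ℝ := (Nat.primeCounting (p ^ 2) : ℝ) with hπ2def
  -- Chebyshev at p
  have B1 : (x - 1) * Real.log 2 ≤ 2 * ((n:ℝ) + 1) * L := by
    have := cheb_real p hp2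
    rw [hπp] at this
    push_cast at this
    have hn0 : (0:ℝ) ≤ (n:ℝ) := Nat.cast_nonneg n
    nlinarith [mul_nonneg hn0 hL.le]
  -- Chebyshev at p^2
  have B2 : (x ^ 2 - 1) * Real.log 2 ≤ 4 * π2 * L := by
    have hsq2 : 2 ≤ p ^ 2 := by nlinarith
    have := cheb_real (p ^ 2) hsq2
    have hcast : ((p ^ 2 : ℕ) : ℝ) = x ^ 2 := by push_cast; ring
    rw [hcast, Real.log_pow] at this
    push_cast at this
    nlinarith [mul_nonneg (sub_nonneg.mpr hπ2pos) hL.le]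
  -- multiply the two bounds
  have hprod : (x - 1) * (x ^ 2 - 1) * (Real.log 2) ^ 2
      ≤ 8 * ((n:ℝ) + 1) * π2 * L ^ 2 := by
    have h1 : 0 ≤ (x - 1) * Real.log 2 := by nlinarith
    have h2 : 0 ≤ (x ^ 2 - 1) * Real.log 2 := by nlinarith
    have h3 : 0 ≤ 2 * ((n:ℝ) + 1) * L := by positivity
    have := mul_le_mul B1 B2 h2 h3
    linarith [this]
  have hkey : (b:ℝ) * x ^ 2 < ((n:ℝ) + 1) * π2 := by
    have h8 : 8 * (b:ℝ) * x ^ 2 * L ^ 2 < 8 * ((n:ℝ) + 1) * π2 * L ^ 2 := lt_of_lt_of_le hQ hprod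
    have hL2 : 0 < L ^ 2 := by positivity
    have h9 : (b:ℝ) * x ^ 2 * L ^ 2 < ((n:ℝ) + 1) * π2 * L ^ 2 := by linarith
    exact lt_of_mul_lt_mul_right h9 hL2.le
  rw [div_lt_iff₀ (by positivity : (0:ℝ) < (n:ℝ) + 1)]
  push_cast
  linarith [hkey]
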